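/- Let k be a field of characteristic ≠ 2,3,7 containing √-3. An element j ∈ k is a fixed point of the Hessian map Hess(j) = (6912-j)³/(27j²) (with j ≠ 0) if and only if j = 1728 or j = (2⁷·3³/7)·(±3√-3 - 1). Equivalently, 27j²·(Hess(j)-j) = 4(j-1728)(-7j²-6912j-47775744) and the quadratic factor has roots (2⁷3³/7)(±3√-3-1). -/

import Mathlib

/-!
Clearing the denominator `27 j²`, the fixed-point equation `Hess j = j` becomes the cubic
`(6912 - j)³ - 27 j³ = 0`, which factors as `4 (j - 1728) (-7 j² - 6912 j - 47775744)`.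
The discriminant of the quadratic factor is `-3 · (2⁸ · 3⁴)²`, so `√-3` splits it into
linear factors with roots `(2⁷ · 3³ / 7) (±3√-3 - 1)`.
-/

section HessianMap

variable {K : Type*} [Field K]

def hessMap (j : K) : K := (6912 - j) ^ 3 / (27 * j ^ 2)

theorem cube_sub_eq_mul_hessQuadratic {R : Type*} [CommRing R] (j : R) :
    (6912 - j) ^ 3 - 27 * j ^ 3 = 4 * (j - 1728) * (-7 * j ^ 2 - 6912 * j - 47775744) := by
  ring

theorem mul_hessMap_sub_self (h27 : (27 : K) ≠ 0) {j : K} (hj : j ≠ 0) :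
    27 * j ^ 2 * (hessMap j - j) = (6912 - j) ^ 3 - 27 * j ^ 3 := by
  unfold hessMap
  field_simp

theorem hessMap_eq_self_iff (h27 : (27 : K) ≠ 0) {j : K} (hj : j ≠ 0) :
    hessMap j = j ↔ (6912 - j) ^ 3 - 27 * j ^ 3 = 0 := by
  rw [← mul_hessMap_sub_self h27 hj, mul_eq_zero, sub_eq_zero,
    or_iff_right (mul_ne_zero h27 (pow_ne_zero 2 hj))]

theorem hessQuadratic_eq_mul (h7 : (7 : K) ≠ 0) {s : K} (hs : s ^ 2 = -3) (j : K) :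
    -7 * j ^ 2 - 6912 * j - 47775744 =
      -7 * (j - 2 ^ 7 * 3 ^ 3 / 7 * (3 * s - 1)) * (j - 2 ^ 7 * 3 ^ 3 / 7 * (-(3 * s) - 1)) := by
  field_simp
  linear_combination (-107495424 : K) * hs

end HessianMap

theorem hessian_fixed_points {K : Type*} [Field K]
    (h2 : (2 : K) ≠ 0) (h3 : (3 : K) ≠ 0) (h7 : (7 : K) ≠ 0)
    (s : K) (hs : s ^ 2 = -3) :
    (∀ j : K, j ≠ 0 →
      27 * j ^ 2 * ((6912 - j) ^ 3 / (27 * j ^ 2) - j) =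
        4 * (j - 1728) * (-7 * j ^ 2 - 6912 * j - 47775744)) ∧
    (∀ j : K, -28 * j ^ 3 + 20736 * j ^ 2 - 143327232 * j + 330225942528 =
        4 * (j - 1728) * (-7 * j ^ 2 - 6912 * j - 47775744)) ∧
    (∀ j : K, j ≠ 0 →
      ((6912 - j) ^ 3 / (27 * j ^ 2) = j ↔
        j = 1728 ∨ j = 2 ^ 7 * 3 ^ 3 / 7 * (3 * s - 1) ∨
          j = 2 ^ 7 * 3 ^ 3 / 7 * (-(3 * s) - 1))) := by
  have h27 : (27 : K) ≠ 0 := by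
    simpa only [show (3 : K) ^ 3 = 27 by norm_num] using pow_ne_zero 3 h3
  have h4 : (4 : K) ≠ 0 := by
    simpa only [show (2 : K) ^ 2 = 4 by norm_num] using pow_ne_zero 2 h2
  refine ⟨fun j hj => ?_, fun j => ?_, fun j hj => ?_⟩
  · rw [← cube_sub_eq_mul_hessQuadratic]
    exact mul_hessMap_sub_self h27 hj
  · rw [← cube_sub_eq_mul_hessQuadratic]
    ring
  · change hessMap j = j ↔ _
    rw [hessMap_eq_self_iff h27 hj, cube_sub_eq_mul_hessQuadratic, hessQuadratic_eq_mul h7 hs]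
    simp only [mul_eq_zero, sub_eq_zero, neg_eq_zero, h4, h7, false_or]
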